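/- (Necessity of rationality for limit cycles.) Consider the switched quantized control system with parameter α satisfying 1 < α < 3/2 and disturbance rounding error Δ_d with 0 < |Δ_d| ≤ 1/2, and suppose condition (9) holds at some time k. Suppose the trajectory is eventually periodic with period m ≥ 1: there exists k̄ ≥ k+2 such that e(j+m) = e(j) and ū(j+m) = ū(j) for all j ≥ k̄. Let n be the number of indices j ∈ {k̄, k̄+1, …, k̄+m−1} with ρ(e(j)) = sign(Δ_d). Then 1 ≤ n < m and |Δ_d| = n/m; in particular Δ_d is rational. -/

import Mathlib

/-- Sign function: 1 for positive, 0 for zero, -1 for negative. -/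
noncomputable def rsign (z : ℝ) : ℤ :=
  if 0 < z then 1 else if z = 0 then 0 else -1

/-- Rounding operator: rounds to the nearest integer, ties away from zero. -/
noncomputable def rho (z : ℝ) : ℤ :=
  if Int.fract |z| < 1/2 then rsign z * ⌊|z|⌋ else rsign z * (⌊|z|⌋ + 1)

/-- The switched quantized control system with parameter `α` and disturbance
rounding error `Δd`, with state trajectory `(e, u)`. -/
def Traj (α Δd : ℝ) (e u : ℕ → ℝ) : Prop :=
  ∀ k : ℕ,
    e (k+1) = e k + (rho (u k) : ℝ) + Δd ∧
    u (k+1) = if rho (e (k+1)) = 0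
      then ((rho (u k) : ℝ) + (rho (e k) : ℝ))
      else (u k + (rho (e k) : ℝ) - α * (rho (e (k+1)) : ℝ))

/-- Condition (9) at time `k`. -/
def Cond9 (α Δd : ℝ) (e u : ℕ → ℝ) (k : ℕ) : Prop :=
  (-(1/2) < e k ∧ e k < 1/2) ∧
  (1 ≤ α - u k * (rsign Δd : ℝ) ∧ α - u k * (rsign Δd : ℝ) < 3/2) ∧
  (-(1/2) < u k ∧ u k < 1/2)

/-!
Starting from condition (9), the state never leaves two regions. In the small region
(`|e|, |ū| < 1/2`) both quantized signals vanish and `e` drifts by `Δ_d`; once `e` crosses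
`1/2` in the direction of `Δ_d` the state is in the overshoot region, where
`ρ(e) = sign Δ_d` and `ρ(ū) = -sign Δ_d`, so the next step pulls `e` back by one unit and
resets `ū` to `0`. Hence `e(j+1) = e(j) + Δ_d - sign(Δ_d)·[ρ(e j) = sign Δ_d]` from time `k`
on, and summing over one period gives `m·Δ_d = n·sign(Δ_d)`, i.e. `n = m·|Δ_d| ∈ (0, m/2]`.
-/

lemma rsign_neg (z : ℝ) : rsign (-z) = -rsign z := by
  unfold rsign
  rcases lt_trichotomy z 0 with h | rfl | h
  · simp [h.ne, neg_pos.mpr h, h.not_gt]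
  · simp
  · simp [h, h.ne', h.not_gt]

lemma rsign_mul_self (z : ℝ) : (rsign z : ℝ) * z = |z| := by
  unfold rsign
  rcases lt_trichotomy z 0 with h | rfl | h
  · simp [h.not_gt, h.ne, abs_of_neg h]
  · simp
  · simp [h, abs_of_pos h]

lemma rsign_eq_one_or_neg_one {z : ℝ} (hz : z ≠ 0) : rsign z = 1 ∨ rsign z = -1 := by
  unfold rsign
  split_ifs <;> simp_all

lemma rsign_ne_zero {z : ℝ} (hz : z ≠ 0) : rsign z ≠ 0 := by
  rcases rsign_eq_one_or_neg_one hz with h | h <;> simp [h]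

lemma rsign_mul_rsign {z : ℝ} (hz : z ≠ 0) : (rsign z : ℝ) * rsign z = 1 := by
  rcases rsign_eq_one_or_neg_one hz with h | h <;> simp [h]

lemma abs_rsign_mul {z : ℝ} (hz : z ≠ 0) (x : ℝ) : |(rsign z : ℝ) * x| = |x| := by
  rcases rsign_eq_one_or_neg_one hz with h | h <;> simp [h]

lemma rho_neg (z : ℝ) : rho (-z) = -rho z := by
  unfold rho
  rw [abs_neg, rsign_neg]
  split_ifs <;> ring

lemma rho_eq_zero_of_abs_lt {z : ℝ} (h : |z| < 1/2) : rho z = 0 := by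
  have hfloor : ⌊|z|⌋ = 0 := Int.floor_eq_zero_iff.mpr ⟨abs_nonneg z, by linarith⟩
  have hfract : Int.fract |z| = |z| := by rw [Int.fract, hfloor, Int.cast_zero, sub_zero]
  rw [rho, if_pos (by rwa [hfract]), hfloor, mul_zero]

lemma rho_eq_one_of_mem_Ico {z : ℝ} (hz : z ∈ Set.Ico (1/2 : ℝ) (3/2)) : rho z = 1 := by
  obtain ⟨h1, h2⟩ := hz
  have hsign : rsign z = 1 := if_pos (by linarith)
  unfold rho
  rw [abs_of_pos (by linarith), hsign, one_mul]
  rcases lt_or_ge z 1 with hz1 | hz1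
  · have hfloor : ⌊z⌋ = 0 := Int.floor_eq_zero_iff.mpr ⟨by linarith, hz1⟩
    rw [if_neg (by rw [Int.fract, hfloor]; push_cast; linarith), hfloor, zero_add, one_mul]
  · have hfloor : ⌊z⌋ = 1 := Int.floor_eq_iff.mpr ⟨by push_cast; linarith, by push_cast; linarith⟩
    rw [if_pos (by rw [Int.fract, hfloor]; push_cast; linarith), hfloor]

lemma rho_eq_of_mul_mem_Ico {s : ℤ} (hs : s = 1 ∨ s = -1) {z : ℝ}
    (hz : (s : ℝ) * z ∈ Set.Ico (1/2 : ℝ) (3/2)) : rho z = s := by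
  rcases hs with rfl | rfl
  · simpa using rho_eq_one_of_mem_Ico hz
  · have := rho_eq_one_of_mem_Ico (z := -z) (by simpa using hz)
    rw [rho_neg] at this
    omega

lemma mul_eq_sum_Ico_of_step_of_return {f c : ℕ → ℝ} {d : ℝ} {a m : ℕ}
    (hstep : ∀ j ∈ Finset.Ico a (a+m), f (j+1) = f j + d - c j) (hret : f (a+m) = f a) :
    (m : ℝ) * d = ∑ j ∈ Finset.Ico a (a+m), c j :=
  calc (m : ℝ) * d = ∑ _j ∈ Finset.Ico a (a+m), d := by simp
    _ = ∑ j ∈ Finset.Ico a (a+m), ((f (j+1) - f j) + c j) :=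
      Finset.sum_congr rfl fun j hj => by rw [hstep j hj]; ring
    _ = ∑ j ∈ Finset.Ico a (a+m), c j := by
      rw [Finset.sum_add_distrib, Finset.sum_Ico_sub f (a.le_add_right m), hret, sub_self, zero_add]

-- The bound on `α - ū·sign Δ_d` (from (9), and automatic once `ū = 0`) puts
-- `-sign(Δ_d)·ū` into `[1, 3/2)` after the jump `ū ↦ ū - α·sign Δ_d` into the overshoot region.
def IsSmall (α Δd x y : ℝ) : Prop :=
  |x| < 1/2 ∧ |y| < 1/2 ∧ α - y * rsign Δd ∈ Set.Ico (1 : ℝ) (3/2)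

def IsOvershoot (Δd x y : ℝ) : Prop :=
  rsign Δd * x ∈ Set.Ico (1/2 : ℝ) 1 ∧ -(rsign Δd * y) ∈ Set.Ico (1 : ℝ) (3/2)

lemma IsOvershoot.rho_fst {Δd x y : ℝ} (hΔ : Δd ≠ 0) (h : IsOvershoot Δd x y) :
    rho x = rsign Δd :=
  rho_eq_of_mul_mem_Ico (rsign_eq_one_or_neg_one hΔ) ⟨h.1.1, by linarith [h.1.2]⟩

lemma IsOvershoot.rho_snd {Δd x y : ℝ} (hΔ : Δd ≠ 0) (h : IsOvershoot Δd x y) :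
    rho y = -rsign Δd := by
  have := rho_eq_of_mul_mem_Ico (rsign_eq_one_or_neg_one hΔ) (z := -y)
    ⟨by linarith [h.2.1], by linarith [h.2.2]⟩
  rw [rho_neg] at this
  omega

namespace Traj

variable {α Δd : ℝ} {e u : ℕ → ℝ}

lemma isSmall_succ (htraj : Traj α Δd e u) (hα : α ∈ Set.Ico (1 : ℝ) (3/2)) {j : ℕ}
    (hρ : rho (u j) + rho (e j) = 0) (he' : |e (j+1)| < 1/2) :
    IsSmall α Δd (e (j+1)) (u (j+1)) := by
  have hu' : u (j+1) = 0 := by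
    rw [(htraj j).2, if_pos (rho_eq_zero_of_abs_lt he')]
    exact_mod_cast hρ
  refine ⟨he', by simp [hu'], by simpa [hu'] using hα⟩

lemma isSmall_or_isOvershoot_succ_of_isSmall (htraj : Traj α Δd e u)
    (hα : α ∈ Set.Ico (1 : ℝ) (3/2)) (hΔ : 0 < |Δd| ∧ |Δd| ≤ 1/2) {j : ℕ}
    (h : IsSmall α Δd (e j) (u j)) :
    IsSmall α Δd (e (j+1)) (u (j+1)) ∨ IsOvershoot Δd (e (j+1)) (u (j+1)) := by
  obtain ⟨he, hu, hαu⟩ := h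
  have hΔ0 : Δd ≠ 0 := abs_pos.mp hΔ.1
  have hre := rho_eq_zero_of_abs_lt he
  have hru := rho_eq_zero_of_abs_lt hu
  have he' : e (j+1) = e j + Δd := by simp [(htraj j).1, hru]
  by_cases hsmall : |e (j+1)| < 1/2
  · exact .inl (htraj.isSmall_succ hα (by simp [hre, hru]) hsmall)
  right
  set s : ℝ := (rsign Δd : ℝ)
  have hse : |s * e j| < 1/2 := by rwa [abs_rsign_mul hΔ0]
  have hse' : s * e (j+1) = s * e j + |Δd| := by rw [he', mul_add, rsign_mul_self]
  have hlower : 1/2 ≤ s * e (j+1) := by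
    have : 1/2 ≤ |s * e (j+1)| := by rw [abs_rsign_mul hΔ0]; exact not_lt.mp hsmall
    cases abs_cases (s * e (j+1)) <;> cases abs_lt.mp hse <;> linarith
  have hupper : s * e (j+1) < 1 := by linarith [(abs_lt.mp hse).2]
  have hre' : rho (e (j+1)) = rsign Δd :=
    rho_eq_of_mul_mem_Ico (rsign_eq_one_or_neg_one hΔ0) ⟨hlower, by linarith⟩
  have hu' : u (j+1) = u j - α * s := by
    simp [(htraj j).2, hre', rsign_ne_zero hΔ0, hre, s]
  refine ⟨⟨hlower, hupper⟩, ?_⟩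
  convert hαu using 1
  rw [hu']
  linear_combination α * rsign_mul_rsign hΔ0

lemma isSmall_succ_of_isOvershoot (htraj : Traj α Δd e u)
    (hα : α ∈ Set.Ico (1 : ℝ) (3/2)) (hΔ : 0 < |Δd| ∧ |Δd| ≤ 1/2) {j : ℕ}
    (h : IsOvershoot Δd (e j) (u j)) : IsSmall α Δd (e (j+1)) (u (j+1)) := by
  have hΔ0 : Δd ≠ 0 := abs_pos.mp hΔ.1
  have hre := h.rho_fst hΔ0
  have hru := h.rho_snd hΔ0
  set s : ℝ := (rsign Δd : ℝ)
  have hse' : s * e (j+1) = s * e j - 1 + |Δd| := by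
    rw [(htraj j).1, hru]
    push_cast
    linear_combination rsign_mul_self Δd - rsign_mul_rsign hΔ0
  have he' : |e (j+1)| < 1/2 := by
    rw [← abs_rsign_mul hΔ0, abs_lt, hse']
    constructor <;> linarith [h.1.1, h.1.2, hΔ.1, hΔ.2]
  exact htraj.isSmall_succ hα (by simp [hre, hru]) he'

lemma isSmall_or_isOvershoot (htraj : Traj α Δd e u) (hα : α ∈ Set.Ico (1 : ℝ) (3/2))
    (hΔ : 0 < |Δd| ∧ |Δd| ≤ 1/2) {k : ℕ} (h9 : Cond9 α Δd e u k) :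
    ∀ j, k ≤ j → IsSmall α Δd (e j) (u j) ∨ IsOvershoot Δd (e j) (u j) := by
  intro j hj
  induction j, hj using Nat.le_induction with
  | base => exact .inl ⟨abs_lt.mpr h9.1, abs_lt.mpr h9.2.2, h9.2.1⟩
  | succ j _ ih =>
    rcases ih with h | h
    · exact htraj.isSmall_or_isOvershoot_succ_of_isSmall hα hΔ h
    · exact .inl (htraj.isSmall_succ_of_isOvershoot hα hΔ h)

lemma e_succ (htraj : Traj α Δd e u) (hΔ : Δd ≠ 0) {j : ℕ}
    (h : IsSmall α Δd (e j) (u j) ∨ IsOvershoot Δd (e j) (u j)) :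
    e (j+1) = e j + Δd - if rho (e j) = rsign Δd then (rsign Δd : ℝ) else 0 := by
  rw [(htraj j).1]
  rcases h with h | h
  · have hre : rho (e j) ≠ rsign Δd := by
      rw [rho_eq_zero_of_abs_lt h.1]; exact (rsign_ne_zero hΔ).symm
    simp [rho_eq_zero_of_abs_lt h.2.1, hre]
  · simp [h.rho_snd hΔ, h.rho_fst hΔ]
    ring

end Traj

open scoped Classical in
theorem stmt_3 (α Δd : ℝ) (hα : 1 < α ∧ α < 3/2) (hΔ : 0 < |Δd| ∧ |Δd| ≤ 1/2)
    (e u : ℕ → ℝ) (htraj : Traj α Δd e u) (k : ℕ) (h9 : Cond9 α Δd e u k)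
    (m : ℕ) (hm : 1 ≤ m) (kb : ℕ) (hkb : k + 2 ≤ kb)
    (hper : ∀ j : ℕ, kb ≤ j → e (j+m) = e j ∧ u (j+m) = u j)
    (n : ℕ)
    (hn : n = ((Finset.Ico kb (kb+m)).filter (fun j => rho (e j) = rsign Δd)).card) :
    (1 ≤ n ∧ n < m) ∧ |Δd| = (n : ℝ) / (m : ℝ) := by
  have hΔ0 : Δd ≠ 0 := abs_pos.mp hΔ.1
  have hstep : ∀ j ∈ Finset.Ico kb (kb+m),
      e (j+1) = e j + Δd - if rho (e j) = rsign Δd then (rsign Δd : ℝ) else 0 := fun j hj =>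
    htraj.e_succ hΔ0 <| htraj.isSmall_or_isOvershoot ⟨hα.1.le, hα.2⟩ hΔ h9 j
      (by rw [Finset.mem_Ico] at hj; omega)
  have hbalance : (m : ℝ) * Δd = n * rsign Δd := by
    rw [mul_eq_sum_Ico_of_step_of_return hstep (hper kb le_rfl).1, ← Finset.sum_filter,
      Finset.sum_const, nsmul_eq_mul, hn]
  have hcount : (m : ℝ) * |Δd| = n :=
    calc (m : ℝ) * |Δd| = rsign Δd * (m * Δd) := by rw [← rsign_mul_self]; ring
      _ = n := by rw [hbalance]; linear_combination n * rsign_mul_rsign hΔ0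
  have hm0 : (0 : ℝ) < m := by exact_mod_cast hm
  have hn1 : (0 : ℝ) < n := hcount ▸ mul_pos hm0 hΔ.1
  have hnm : (n : ℝ) < m := by rw [← hcount]; nlinarith [hΔ.2]
  exact ⟨⟨by exact_mod_cast hn1, by exact_mod_cast hnm⟩, by rw [← hcount]; field_simp⟩
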